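/- Let w ∈ A₂^d and let {λ_I}_{I∈D} be a sequence of nonnegative numbers that is Carleson with constant Q, i.e. (1/|J|) Σ_{I∈D(J)} λ_I ≤ Q for every J ∈ D. Then for every J ∈ D, (1/|J|) Σ_{I∈D(J)} λ_I / (m_I w⁻¹) ≤ 4 Q · m_J w. -/

import Mathlib

open MeasureTheory Set

noncomputable section

/-- The dyadic interval `[k 2^{-j}, (k+1) 2^{-j})`, indexed by `I = (j, k)`. -/
def dyadicI (I : ℤ × ℤ) : Set ℝ :=
  Set.Ico ((I.2 : ℝ) * 2 ^ (-I.1)) (((I.2 : ℝ) + 1) * 2 ^ (-I.1))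

/-- The length `|I| = 2^{-j}` of the dyadic interval indexed by `I = (j, k)`. -/
def len (I : ℤ × ℤ) : ℝ := 2 ^ (-I.1)

/-- The left half `I⁺` of the dyadic interval `I`. -/
def leftHalf (I : ℤ × ℤ) : ℤ × ℤ := (I.1 + 1, 2 * I.2)

/-- The right half `I⁻` of the dyadic interval `I`. -/
def rightHalf (I : ℤ × ℤ) : ℤ × ℤ := (I.1 + 1, 2 * I.2 + 1)

/-- The average `m_I f = (1/|I|) ∫_I f`. -/
def avg (f : ℝ → ℝ) (I : ℤ × ℤ) : ℝ := (len I)⁻¹ * ∫ x in dyadicI I, f x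

/-- The Haar function `h_I = |I|^{-1/2} (χ_{I⁺} - χ_{I⁻})`. -/
def haar (I : ℤ × ℤ) (x : ℝ) : ℝ :=
  (Real.sqrt (len I))⁻¹ *
    ((dyadicI (leftHalf I)).indicator (fun _ => (1 : ℝ)) x -
      (dyadicI (rightHalf I)).indicator (fun _ => (1 : ℝ)) x)

/-- The Haar coefficient `b_I = ⟨b, h_I⟩`. -/
def haarCoef (b : ℝ → ℝ) (I : ℤ × ℤ) : ℝ := ∫ x, b x * haar I x

/-- The dyadic BMO norm of `b`. -/
def bmoNorm (b : ℝ → ℝ) : ℝ :=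
  Real.sqrt (⨆ I : ℤ × ℤ, (len I)⁻¹ * ∫ x in dyadicI I, (b x - avg b I) ^ 2)

/-- The `A₂^d` characteristic `‖w‖_{A₂^d} = sup_I (m_I w)(m_I w⁻¹)`. -/
def A2const (w : ℝ → ℝ) : ℝ :=
  ⨆ I : ℤ × ℤ, avg w I * avg (fun x => (w x)⁻¹) I

/-!
A Bellman function argument with `B(u, v, l) = 4Qu - 4Q² / (v (Q + l))`, where `u`, `v`, `l`
stand for `m_J w`, `m_J w⁻¹` and the Carleson average `|J|⁻¹ Σ_{I ∈ S} λ_I`. By induction on the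
depth of a finite family `S ⊆ D(J)`,
`Σ_{I ∈ S} λ_I / m_I w⁻¹ ≤ |J| B(m_J w, m_J w⁻¹, |J|⁻¹ Σ_{I ∈ S} λ_I)`, and `B ≤ 4Qu`.
For `S = ∅` this is `(m_J w)(m_J w⁻¹) ≥ 1`, Jensen's inequality for `t ↦ 1/t`. The induction
step splits `S` into `J` itself and the parts lying in the two halves of `J`, and reduces to
`a / v + (B(u₁, v₁, l₁) + B(u₂, v₂, l₂)) / 2 ≤ B(u, v, a + l)` when `u`, `v`, `l` are the means
of the children's values and `a + l ≤ Q`: this follows from the convexity of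
`(v, l) ↦ 1 / (v (Q + l))` and from `(Q + l)(Q + a + l) ≤ 4Q²`.
-/

lemma len_pos (I : ℤ × ℤ) : 0 < len I := zpow_pos two_pos _

lemma len_leftHalf (I : ℤ × ℤ) : len (leftHalf I) = len I / 2 := by
  rw [len, len, leftHalf, neg_add, zpow_add₀ two_ne_zero, zpow_neg_one, div_eq_mul_inv]

lemma len_rightHalf (I : ℤ × ℤ) : len (rightHalf I) = len I / 2 := len_leftHalf I

lemma dyadicI_eq (I : ℤ × ℤ) : dyadicI I = Ico (I.2 * len I) ((I.2 + 1) * len I) := rfl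

lemma dyadicI_leftHalf (I : ℤ × ℤ) :
    dyadicI (leftHalf I) = Ico (I.2 * len I) ((I.2 + 1 / 2) * len I) := by
  rw [dyadicI_eq, len_leftHalf, leftHalf]
  push_cast
  congr 1 <;> ring

lemma dyadicI_rightHalf (I : ℤ × ℤ) :
    dyadicI (rightHalf I) = Ico ((I.2 + 1 / 2) * len I) ((I.2 + 1) * len I) := by
  rw [dyadicI_eq, len_rightHalf, rightHalf]
  push_cast
  congr 1 <;> ring

lemma dyadicI_leftHalf_union_rightHalf (I : ℤ × ℤ) :
    dyadicI (leftHalf I) ∪ dyadicI (rightHalf I) = dyadicI I := by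
  have := len_pos I
  rw [dyadicI_leftHalf, dyadicI_rightHalf, dyadicI_eq, Ico_union_Ico_eq_Ico] <;> nlinarith

lemma disjoint_dyadicI_leftHalf_rightHalf (I : ℤ × ℤ) :
    Disjoint (dyadicI (leftHalf I)) (dyadicI (rightHalf I)) := by
  rw [dyadicI_leftHalf, dyadicI_rightHalf]
  exact Ico_disjoint_Ico_same

lemma dyadicI_subset_iff {I J : ℤ × ℤ} : dyadicI I ⊆ dyadicI J ↔
    J.2 * len J ≤ I.2 * len I ∧ (I.2 + 1) * len I ≤ (J.2 + 1) * len J := by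
  rw [dyadicI_eq, dyadicI_eq, Ico_subset_Ico_iff]
  nlinarith [len_pos I]

lemma fst_le_of_dyadicI_subset {I J : ℤ × ℤ} (h : dyadicI I ⊆ dyadicI J) : J.1 ≤ I.1 := by
  obtain ⟨h₁, h₂⟩ := dyadicI_subset_iff.1 h
  have : (2 : ℝ) ^ (-I.1) ≤ 2 ^ (-J.1) := by rw [← len, ← len]; nlinarith
  have := (zpow_le_zpow_iff_right₀ one_lt_two).1 this
  omega

lemma eq_of_dyadicI_subset_of_fst_eq {I J : ℤ × ℤ} (h : dyadicI I ⊆ dyadicI J)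
    (hfst : I.1 = J.1) : I = J := by
  have hlen : len I = len J := by rw [len, len, hfst]
  obtain ⟨h₁, h₂⟩ := dyadicI_subset_iff.1 h
  rw [hlen] at h₁ h₂
  have := len_pos J
  have : (I.2 : ℝ) = J.2 := le_antisymm (by nlinarith) (by nlinarith)
  exact Prod.ext hfst (by exact_mod_cast this)

lemma dyadicI_subset_leftHalf_or_rightHalf {I J : ℤ × ℤ} (h : dyadicI I ⊆ dyadicI J)
    (hne : I ≠ J) : dyadicI I ⊆ dyadicI (leftHalf J) ∨ dyadicI I ⊆ dyadicI (rightHalf J) := by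
  obtain ⟨d, hd⟩ : ∃ d : ℕ, I.1 = J.1 + 1 + d := by
    have := fst_le_of_dyadicI_subset h
    have : J.1 ≠ I.1 := fun hfst => hne (eq_of_dyadicI_subset_of_fst_eq h hfst.symm)
    exact ⟨(I.1 - J.1 - 1).toNat, by omega⟩
  -- the midpoint of `J` is an integer multiple `M` of `|I|`
  set M : ℤ := (2 * J.2 + 1) * 2 ^ d
  have hmid : ((J.2 : ℝ) + 1 / 2) * len J = M * len I := by
    have : len J = 2 * 2 ^ d * len I := by
      rw [len, len, hd, neg_add, neg_add, zpow_add₀ two_ne_zero, zpow_add₀ two_ne_zero]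
      simp only [zpow_neg, zpow_one, zpow_natCast]
      field_simp
    rw [this]
    push_cast [M]
    ring
  have := len_pos I
  obtain ⟨h₁, h₂⟩ := dyadicI_subset_iff.1 h
  rw [dyadicI_leftHalf, dyadicI_rightHalf, hmid, dyadicI_eq]
  rcases lt_or_ge I.2 M with hIM | hMI
  · have : (I.2 : ℝ) + 1 ≤ M := by exact_mod_cast hIM
    exact Or.inl (Ico_subset_Ico h₁ (by nlinarith))
  · have : (M : ℝ) ≤ I.2 := by exact_mod_cast hMI
    exact Or.inr (Ico_subset_Ico (by nlinarith) h₂)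

lemma measurableSet_dyadicI (I : ℤ × ℤ) : MeasurableSet (dyadicI I) := measurableSet_Ico

lemma volume_dyadicI (I : ℤ × ℤ) : volume (dyadicI I) = ENNReal.ofReal (len I) := by
  rw [dyadicI_eq, Real.volume_Ico]
  congr 1
  ring

lemma volume_real_dyadicI (I : ℤ × ℤ) : volume.real (dyadicI I) = len I := by
  rw [measureReal_def, volume_dyadicI, ENNReal.toReal_ofReal (len_pos I).le]

instance (I : ℤ × ℤ) : IsFiniteMeasure (volume.restrict (dyadicI I)) :=
  isFiniteMeasure_restrict.2 (by rw [volume_dyadicI]; exact ENNReal.ofReal_ne_top)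

lemma MeasureTheory.LocallyIntegrable.integrableOn_dyadicI {f : ℝ → ℝ}
    (hf : LocallyIntegrable f volume) (I : ℤ × ℤ) : IntegrableOn f (dyadicI I) volume :=
  (hf.integrableOn_isCompact isCompact_Icc).mono_set Ico_subset_Icc_self

lemma avg_eq_avg_leftHalf_add_avg_rightHalf {f : ℝ → ℝ} (hf : LocallyIntegrable f volume)
    (I : ℤ × ℤ) : avg f I = (avg f (leftHalf I) + avg f (rightHalf I)) / 2 := by
  have := len_pos I
  rw [avg, avg, avg, ← dyadicI_leftHalf_union_rightHalf I,
    setIntegral_union (disjoint_dyadicI_leftHalf_rightHalf I) (measurableSet_dyadicI _)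
      (hf.integrableOn_dyadicI _) (hf.integrableOn_dyadicI _), len_leftHalf, len_rightHalf]
  field_simp

lemma avg_pos {f : ℝ → ℝ} (hf : LocallyIntegrable f volume) (hpos : ∀ x, 0 < f x)
    (I : ℤ × ℤ) : 0 < avg f I := by
  refine mul_pos (inv_pos.2 (len_pos I)) ?_
  rw [setIntegral_pos_iff_support_of_nonneg_ae
    (Filter.Eventually.of_forall fun x => (hpos x).le) (hf.integrableOn_dyadicI I),
    Function.support_eq_univ (fun x => (hpos x).ne'), univ_inter, volume_dyadicI]
  simp [len_pos I]

lemma inv_avg_le_avg_inv {w : ℝ → ℝ} (hwpos : ∀ x, 0 < w x) (hwloc : LocallyIntegrable w volume)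
    (hwinvloc : LocallyIntegrable (fun x => (w x)⁻¹) volume) (I : ℤ × ℤ) :
    (avg w I)⁻¹ ≤ avg (fun x => (w x)⁻¹) I := by
  set c := avg w I with hc
  have hcpos : 0 < c := avg_pos hwloc hwpos I
  have hlen := len_pos I
  have htangent : ∀ x, 2 * c⁻¹ - c⁻¹ ^ 2 * w x ≤ (w x)⁻¹ := fun x => by
    have := hwpos x
    rw [← sub_nonneg]
    have : (w x)⁻¹ - (2 * c⁻¹ - c⁻¹ ^ 2 * w x) = (w x - c) ^ 2 / (w x * c ^ 2) := by
      field_simp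
      ring
    rw [this]
    positivity
  have hintegral : ∫ x in dyadicI I, (2 * c⁻¹ - c⁻¹ ^ 2 * w x) = len I * c⁻¹ := by
    rw [integral_sub (integrable_const _) ((hwloc.integrableOn_dyadicI I).const_mul _),
      integral_const_mul (c⁻¹ ^ 2), setIntegral_const, volume_real_dyadicI, smul_eq_mul]
    have : ∫ x in dyadicI I, w x = len I * c := by rw [hc, avg]; field_simp
    rw [this]
    field_simp
    ring
  calc c⁻¹ = (len I)⁻¹ * ∫ x in dyadicI I, (2 * c⁻¹ - c⁻¹ ^ 2 * w x) := by
        rw [hintegral]; field_simp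
    _ ≤ avg (fun x => (w x)⁻¹) I :=
        mul_le_mul_of_nonneg_left (setIntegral_mono ((integrable_const _).sub
          ((hwloc.integrableOn_dyadicI I).const_mul _)) (hwinvloc.integrableOn_dyadicI I) htangent)
          (inv_nonneg.2 hlen.le)

lemma one_le_avg_mul_avg_inv {w : ℝ → ℝ} (hwpos : ∀ x, 0 < w x)
    (hwloc : LocallyIntegrable w volume)
    (hwinvloc : LocallyIntegrable (fun x => (w x)⁻¹) volume) (I : ℤ × ℤ) :
    1 ≤ avg w I * avg (fun x => (w x)⁻¹) I :=
  (inv_le_iff_one_le_mul₀' (avg_pos hwloc hwpos I)).1 (inv_avg_le_avg_inv hwpos hwloc hwinvloc I)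

def bellman (Q u v l : ℝ) : ℝ := 4 * Q * u - 4 * Q ^ 2 / (v * (Q + l))

lemma bellman_le {Q u v l : ℝ} (hQ : 0 ≤ Q) (hv : 0 ≤ v) (hl : 0 ≤ l) :
    bellman Q u v l ≤ 4 * Q * u :=
  sub_le_self _ (by positivity)

lemma bellman_zero_nonneg {Q u v : ℝ} (hQ : 0 ≤ Q) (hv : 0 < v) (huv : 1 ≤ u * v) :
    0 ≤ bellman Q u v 0 := by
  rw [bellman, add_zero, sub_nonneg]
  rcases hQ.eq_or_lt with rfl | hQ
  · simp
  · rw [div_le_iff₀ (by positivity)]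
    nlinarith [mul_le_mul_of_nonneg_left huv (by positivity : 0 ≤ 4 * Q ^ 2)]

lemma inv_mul_midpoint_le_midpoint_inv_mul {x₁ x₂ y₁ y₂ : ℝ} (hx₁ : 0 < x₁) (hx₂ : 0 < x₂)
    (hy₁ : 0 < y₁) (hy₂ : 0 < y₂) :
    ((x₁ + x₂) / 2 * ((y₁ + y₂) / 2))⁻¹ ≤ ((x₁ * y₁)⁻¹ + (x₂ * y₂)⁻¹) / 2 := by
  rw [inv_le_iff_one_le_mul₀' (by positivity)]
  field_simp
  nlinarith [sq_nonneg (x₁ * y₁ - x₂ * y₂), sq_nonneg (x₁ * y₂ - x₂ * y₁),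
    mul_pos hx₁ hy₁, mul_pos hx₂ hy₂, mul_pos hx₁ hy₂, mul_pos hx₂ hy₁]

lemma bellman_main_inequality {Q a u₁ u₂ v₁ v₂ l₁ l₂ : ℝ} (hQ : 0 ≤ Q) (ha : 0 ≤ a)
    (hv₁ : 0 < v₁) (hv₂ : 0 < v₂) (hl₁ : 0 ≤ l₁) (hl₂ : 0 ≤ l₂) (hl : a + (l₁ + l₂) / 2 ≤ Q) :
    a / ((v₁ + v₂) / 2) + (bellman Q u₁ v₁ l₁ + bellman Q u₂ v₂ l₂) / 2 ≤
      bellman Q ((u₁ + u₂) / 2) ((v₁ + v₂) / 2) (a + (l₁ + l₂) / 2) := by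
  rcases hQ.eq_or_lt with rfl | hQ
  · obtain rfl : a = 0 := by linarith
    simp [bellman]
  set v := (v₁ + v₂) / 2
  set s := (l₁ + l₂) / 2
  have hv : 0 < v := by positivity
  have hconvex : (v * (Q + s))⁻¹ ≤ ((v₁ * (Q + l₁))⁻¹ + (v₂ * (Q + l₂))⁻¹) / 2 := by
    have := inv_mul_midpoint_le_midpoint_inv_mul hv₁ hv₂ (by linarith : 0 < Q + l₁)
      (by linarith : 0 < Q + l₂)
    rwa [show (Q + l₁ + (Q + l₂)) / 2 = Q + s by ring] at this
  have hshift : a / v + 4 * Q ^ 2 / (v * (Q + (a + s))) ≤ 4 * Q ^ 2 / (v * (Q + s)) := by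
    have hs : 0 ≤ s := by positivity
    rw [← sub_nonneg]
    have : 4 * Q ^ 2 / (v * (Q + s)) - (a / v + 4 * Q ^ 2 / (v * (Q + (a + s)))) =
        a * (4 * Q ^ 2 - (Q + s) * (Q + (a + s))) / (v * (Q + s) * (Q + (a + s))) := by
      field_simp
      ring
    rw [this]
    exact div_nonneg (mul_nonneg ha (by nlinarith)) (by positivity)
  have := mul_le_mul_of_nonneg_left hconvex (by positivity : 0 ≤ 4 * Q ^ 2)
  simp only [bellman, div_eq_mul_inv (4 * Q ^ 2)] at hshift ⊢
  linarith

lemma Finset.exists_fst_lt_add (S : Finset (ℤ × ℤ)) (j : ℤ) :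
    ∃ n : ℕ, ∀ I ∈ S, I.1 < j + n := by
  obtain ⟨m, hm⟩ := (S.image Prod.fst).bddAbove
  refine ⟨(m - j).toNat + 1, fun I hI => ?_⟩
  have : I.1 ≤ m := hm (Finset.mem_coe.2 (Finset.mem_image_of_mem _ hI))
  omega

lemma exists_split_of_forall_dyadicI_subset {J : ℤ × ℤ} {S : Finset (ℤ × ℤ)}
    (hS : ∀ I ∈ S, dyadicI I ⊆ dyadicI J) :
    ∃ SL SR : Finset (ℤ × ℤ), SL ⊆ S ∧ SR ⊆ S ∧
      (∀ I ∈ SL, dyadicI I ⊆ dyadicI (leftHalf J)) ∧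
      (∀ I ∈ SR, dyadicI I ⊆ dyadicI (rightHalf J)) ∧
      ∀ f : ℤ × ℤ → ℝ,
        ∑ I ∈ S, f I = ∑ I ∈ S with I = J, f I + (∑ I ∈ SL, f I + ∑ I ∈ SR, f I) := by
  classical
  refine ⟨S.filter fun I => I ≠ J ∧ dyadicI I ⊆ dyadicI (leftHalf J),
    S.filter fun I => I ≠ J ∧ ¬ dyadicI I ⊆ dyadicI (leftHalf J),
    Finset.filter_subset _ _, Finset.filter_subset _ _,
    fun I hI => (Finset.mem_filter.1 hI).2.2, fun I hI => ?_, fun f => ?_⟩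
  · obtain ⟨hIS, hne, hnotL⟩ := Finset.mem_filter.1 hI
    exact (dyadicI_subset_leftHalf_or_rightHalf (hS I hIS) hne).resolve_left hnotL
  · rw [← Finset.filter_filter, ← Finset.filter_filter, Finset.sum_filter_add_sum_filter_not,
      Finset.sum_filter_add_sum_filter_not]

lemma sum_div_avg_inv_le_len_mul_bellman_of_halves {w : ℝ → ℝ} (hwpos : ∀ x, 0 < w x)
    (hwloc : LocallyIntegrable w volume)
    (hwinvloc : LocallyIntegrable (fun x => (w x)⁻¹) volume)
    {lam : ℤ × ℤ → ℝ} (hlam : ∀ I, 0 ≤ lam I) {Q : ℝ} (hQ0 : 0 ≤ Q) {J : ℤ × ℤ}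
    {S SL SR : Finset (ℤ × ℤ)} (hQ : (len J)⁻¹ * ∑ I ∈ S, lam I ≤ Q)
    (hsplit : ∀ f : ℤ × ℤ → ℝ,
      ∑ I ∈ S, f I = ∑ I ∈ S with I = J, f I + (∑ I ∈ SL, f I + ∑ I ∈ SR, f I))
    (hSL : ∑ I ∈ SL, lam I / avg (fun x => (w x)⁻¹) I ≤ len (leftHalf J) *
      bellman Q (avg w (leftHalf J)) (avg (fun x => (w x)⁻¹) (leftHalf J))
        ((len (leftHalf J))⁻¹ * ∑ I ∈ SL, lam I))
    (hSR : ∑ I ∈ SR, lam I / avg (fun x => (w x)⁻¹) I ≤ len (rightHalf J) *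
      bellman Q (avg w (rightHalf J)) (avg (fun x => (w x)⁻¹) (rightHalf J))
        ((len (rightHalf J))⁻¹ * ∑ I ∈ SR, lam I)) :
    ∑ I ∈ S, lam I / avg (fun x => (w x)⁻¹) I ≤
      len J * bellman Q (avg w J) (avg (fun x => (w x)⁻¹) J) ((len J)⁻¹ * ∑ I ∈ S, lam I) := by
  set L := leftHalf J
  set R := rightHalf J
  set v := fun I => avg (fun x => (w x)⁻¹) I
  have hv (I : ℤ × ℤ) : 0 < v I := avg_pos hwinvloc (fun x => inv_pos.2 (hwpos x)) I
  have hmass_nonneg (I : ℤ × ℤ) (T : Finset (ℤ × ℤ)) : 0 ≤ (len I)⁻¹ * ∑ I ∈ T, lam I :=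
    mul_nonneg (inv_nonneg.2 (len_pos I).le) (Finset.sum_nonneg fun I _ => hlam I)
  have hlen := len_pos J
  have hmass : (len J)⁻¹ * ∑ I ∈ S with I = J, lam I +
      ((len L)⁻¹ * ∑ I ∈ SL, lam I + (len R)⁻¹ * ∑ I ∈ SR, lam I) / 2 =
        (len J)⁻¹ * ∑ I ∈ S, lam I := by
    rw [hsplit lam, len_leftHalf, len_rightHalf]
    field_simp
  have hmain := bellman_main_inequality hQ0 (u₁ := avg w L) (u₂ := avg w R)
    (hmass_nonneg J _) (hv L) (hv R) (hmass_nonneg L SL) (hmass_nonneg R SR) (hmass ▸ hQ)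
  rw [hmass, ← avg_eq_avg_leftHalf_add_avg_rightHalf hwloc,
    ← avg_eq_avg_leftHalf_add_avg_rightHalf hwinvloc] at hmain
  set A := ∑ I ∈ S with I = J, lam I
  have hA : ∑ I ∈ S with I = J, lam I / v I = A / v J := by
    rw [Finset.sum_div]
    exact Finset.sum_congr rfl fun I hI => by rw [(Finset.mem_filter.1 hI).2]
  have hvJ := hv J
  calc ∑ I ∈ S, lam I / v I = A / v J + (∑ I ∈ SL, lam I / v I + ∑ I ∈ SR, lam I / v I) := by
        rw [hsplit, hA]
    _ ≤ A / v J + (len L * bellman Q (avg w L) (v L) ((len L)⁻¹ * ∑ I ∈ SL, lam I) +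
          len R * bellman Q (avg w R) (v R) ((len R)⁻¹ * ∑ I ∈ SR, lam I)) := by
        gcongr
    _ = len J * ((len J)⁻¹ * A / v J +
          (bellman Q (avg w L) (v L) ((len L)⁻¹ * ∑ I ∈ SL, lam I) +
            bellman Q (avg w R) (v R) ((len R)⁻¹ * ∑ I ∈ SR, lam I)) / 2) := by
        rw [len_leftHalf, len_rightHalf]
        field_simp
    _ ≤ len J * bellman Q (avg w J) (v J) ((len J)⁻¹ * ∑ I ∈ S, lam I) :=
        mul_le_mul_of_nonneg_left hmain hlen.le

lemma sum_div_avg_inv_le_len_mul_bellman {w : ℝ → ℝ} (hwpos : ∀ x, 0 < w x)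
    (hwloc : LocallyIntegrable w volume)
    (hwinvloc : LocallyIntegrable (fun x => (w x)⁻¹) volume)
    {lam : ℤ × ℤ → ℝ} (hlam : ∀ I, 0 ≤ lam I) {Q : ℝ} (hQ0 : 0 ≤ Q)
    (hQ : ∀ (J : ℤ × ℤ) (S : Finset (ℤ × ℤ)), (∀ I ∈ S, dyadicI I ⊆ dyadicI J) →
      (len J)⁻¹ * ∑ I ∈ S, lam I ≤ Q) (n : ℕ) :
    ∀ (J : ℤ × ℤ) (S : Finset (ℤ × ℤ)), (∀ I ∈ S, dyadicI I ⊆ dyadicI J) →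
      (∀ I ∈ S, I.1 < J.1 + n) →
      ∑ I ∈ S, lam I / avg (fun x => (w x)⁻¹) I ≤
        len J * bellman Q (avg w J) (avg (fun x => (w x)⁻¹) J) ((len J)⁻¹ * ∑ I ∈ S, lam I) := by
  induction n with
  | zero =>
    intro J S hS hdepth
    obtain rfl : S = ∅ := Finset.eq_empty_of_forall_notMem fun I hI => by
      have := fst_le_of_dyadicI_subset (hS I hI)
      have := hdepth I hI
      omega
    simpa using mul_nonneg (len_pos J).le (bellman_zero_nonneg hQ0
      (avg_pos hwinvloc (fun x => inv_pos.2 (hwpos x)) J)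
      (one_le_avg_mul_avg_inv hwpos hwloc hwinvloc J))
  | succ n ih =>
    intro J S hS hdepth
    obtain ⟨SL, SR, hSLS, hSRS, hSL, hSR, hsplit⟩ := exists_split_of_forall_dyadicI_subset hS
    have hdepth' : ∀ I ∈ S, I.1 < J.1 + 1 + n := fun I hI => by
      have := hdepth I hI
      push_cast at this
      omega
    exact sum_div_avg_inv_le_len_mul_bellman_of_halves hwpos hwloc hwinvloc hlam hQ0
      (hQ J S hS) hsplit (ih _ SL hSL fun I hI => hdepth' I (hSLS hI))
      (ih _ SR hSR fun I hI => hdepth' I (hSRS hI))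

theorem carleson_weighted_bound
    (w : ℝ → ℝ) (hwpos : ∀ x, 0 < w x)
    (hwloc : LocallyIntegrable w volume)
    (hwinvloc : LocallyIntegrable (fun x => (w x)⁻¹) volume)
    (lam : ℤ × ℤ → ℝ) (hlam : ∀ I, 0 ≤ lam I) (Q : ℝ)
    (hQ : ∀ (J : ℤ × ℤ) (S : Finset (ℤ × ℤ)), (∀ I ∈ S, dyadicI I ⊆ dyadicI J) →
      (len J)⁻¹ * ∑ I ∈ S, lam I ≤ Q) :
    ∀ (J : ℤ × ℤ) (S : Finset (ℤ × ℤ)), (∀ I ∈ S, dyadicI I ⊆ dyadicI J) →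
      (len J)⁻¹ * ∑ I ∈ S, lam I / avg (fun x => (w x)⁻¹) I ≤ 4 * Q * avg w J := by
  intro J S hS
  have hQ0 : 0 ≤ Q := by simpa using hQ J ∅ (by simp)
  obtain ⟨n, hdepth⟩ := S.exists_fst_lt_add J.1
  have hlen := len_pos J
  calc (len J)⁻¹ * ∑ I ∈ S, lam I / avg (fun x => (w x)⁻¹) I
      ≤ (len J)⁻¹ * (len J * bellman Q (avg w J) (avg (fun x => (w x)⁻¹) J)
          ((len J)⁻¹ * ∑ I ∈ S, lam I)) :=
        mul_le_mul_of_nonneg_left (sum_div_avg_inv_le_len_mul_bellman hwpos hwloc hwinvloc hlam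
          hQ0 hQ n J S hS hdepth) (inv_nonneg.2 hlen.le)
    _ = bellman Q (avg w J) (avg (fun x => (w x)⁻¹) J) ((len J)⁻¹ * ∑ I ∈ S, lam I) :=
        inv_mul_cancel_left₀ hlen.ne' _
    _ ≤ 4 * Q * avg w J :=
        bellman_le hQ0 (avg_pos hwinvloc (fun x => inv_pos.2 (hwpos x)) J).le
          (mul_nonneg (inv_nonneg.2 hlen.le) (Finset.sum_nonneg fun I _ => hlam I))
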